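/- The dual (2,2;M=2/3,R=1) demand-private scheme of Table IV is correct: for every pair of cache-randomness bits (r₀,r₁) ∈ {0,1}² and every demand pair (d₀,d₁) ∈ {0,1}², there exists a transmission index t ∈ {0,1,2,3} and decoding functions dec₀, dec₁ : V² × V³ → V³ such that for all files A,B ∈ V³: dec₀(Z'_{0,r₀}(A,B), Y_t(A,B)) equals A if d₀ = 0 and B if d₀ = 1, and dec₁(Z'_{1,r₁}(A,B), Y_t(A,B)) equals A if d₁ = 0 and B if d₁ = 1. -/
import Mathlib


/-- The two possible cache contents of user `i` in the dual scheme of Table IV: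
`dualCache22 i ρ A B` is the cache `Z'_{iρ}` as a pair of elements of `V`. -/
def dualCache22 {V : Type*} [AddCommGroup V] (i : Fin 2) (ρ : ZMod 2)
    (A B : Fin 3 → V) : Fin 2 → V :=
  if i = 0 then
    if ρ = 0 then ![A 1, B 1]
    else ![A 2, B 2]
  else
    if ρ = 0 then ![A 0 + A 1 + A 2, B 0 + B 1 + B 2]
    else ![A 0, B 0]

/-- The four possible transmissions `Y_t` of the dual scheme of Table IV. -/
def dualTx22 {V : Type*} [AddCommGroup V] (t : Fin 4) (A B : Fin 3 → V) : Fin 3 → V :=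
  if t = 0 then ![A 0 + A 2, B 0 + B 2, A 2 + B 1]
  else if t = 1 then ![A 0 + A 1, B 0 + B 1, A 2 + B 1]
  else if t = 2 then ![A 0 + A 1, B 0 + B 1, A 1 + B 2]
  else ![A 0 + A 2, B 0 + B 2, A 1 + B 2]

/-- Correctness of the dual `(2,2;M=2/3,R=1)` demand-private scheme of Table IV:
for every pair of cache-randomness bits and every demand pair there is a
transmission index `t` and (file-independent) decoders letting each user recover
its demanded file (demand `0` = file `A`, demand `1` = file `B`). -/
theorem table4_dual_scheme_correct (V : Type*) [AddCommGroup V] [Module (ZMod 2) V]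
    (r d : Fin 2 → ZMod 2) :
    ∃ (t : Fin 4) (dec0 dec1 : (Fin 2 → V) × (Fin 3 → V) → (Fin 3 → V)),
      ∀ A B : Fin 3 → V,
        dec0 (dualCache22 0 (r 0) A B, dualTx22 t A B) =
          (if d 0 = 0 then A else B) ∧
        dec1 (dualCache22 1 (r 1) A B, dualTx22 t A B) =
          (if d 1 = 0 then A else B) := by
  have h2 : ∀ x : V, (2:ℕ) • x = 0 := fun x => by
    have : (2 : ZMod 2) • x = 0 := by
      rw [show (2:ZMod 2) = 0 by decide, zero_smul]
    rwa [show ((2:ℕ) • x) = (2 : ZMod 2) • x by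
      rw [two_smul, two_smul]]
  have h2z : ∀ x : V, (2:ℤ) • x = 0 := fun x => by
    rw [show ((2:ℤ) • x) = (2:ℕ) • x by rw [two_smul, two_smul]]; exact h2 x
  have hcases : ∀ x : ZMod 2, x = 0 ∨ x = 1 := by decide
  rcases hcases (r 0) with h0|h0 <;> rcases hcases (r 1) with h1|h1 <;>
    rcases hcases (d 0) with hd0|hd0 <;> rcases hcases (d 1) with hd1|hd1
  · exact ⟨0, fun p => ![ p.1 1 + p.2 0 + p.2 2, p.1 0, p.1 1 + p.2 2 ], fun p => ![ p.1 1 + p.2 0 + p.2 1 + p.2 2, p.1 0 + p.2 0, p.1 1 + p.2 1 + p.2 2 ], fun A B => by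
      rw [h0, h1, hd0, hd1]
      refine ⟨?_, ?_⟩ <;> funext i <;> fin_cases i <;>
        (simp [dualCache22, dualTx22] <;> (try abel_nf) <;> (try simp [h2, h2z]))⟩
  · exact ⟨1, fun p => ![ p.1 0 + p.2 0, p.1 0, p.1 1 + p.2 2 ], fun p => ![ p.1 0 + p.2 0 + p.2 1 + p.2 2, p.1 0 + p.2 0 + p.2 2, p.1 1 + p.2 1 ], fun A B => by
      rw [h0, h1, hd0, hd1]
      refine ⟨?_, ?_⟩ <;> funext i <;> fin_cases i <;>
        (simp [dualCache22, dualTx22] <;> (try abel_nf) <;> (try simp [h2, h2z]))⟩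
  · exact ⟨2, fun p => ![ p.1 1 + p.2 1, p.1 1, p.1 0 + p.2 2 ], fun p => ![ p.1 1 + p.2 0 + p.2 1 + p.2 2, p.1 1 + p.2 1 + p.2 2, p.1 0 + p.2 0 ], fun A B => by
      rw [h0, h1, hd0, hd1]
      refine ⟨?_, ?_⟩ <;> funext i <;> fin_cases i <;>
        (simp [dualCache22, dualTx22] <;> (try abel_nf) <;> (try simp [h2, h2z]))⟩
  · exact ⟨3, fun p => ![ p.1 0 + p.2 1 + p.2 2, p.1 1, p.1 0 + p.2 2 ], fun p => ![ p.1 0 + p.2 0 + p.2 1 + p.2 2, p.1 1 + p.2 1, p.1 0 + p.2 0 + p.2 2 ], fun A B => by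
      rw [h0, h1, hd0, hd1]
      refine ⟨?_, ?_⟩ <;> funext i <;> fin_cases i <;>
        (simp [dualCache22, dualTx22] <;> (try abel_nf) <;> (try simp [h2, h2z]))⟩
  · exact ⟨1, fun p => ![ p.1 0 + p.2 0, p.1 0, p.1 1 + p.2 2 ], fun p => ![ p.1 0, p.1 0 + p.2 0, p.1 1 + p.2 1 + p.2 2 ], fun A B => by
      rw [h0, h1, hd0, hd1]
      refine ⟨?_, ?_⟩ <;> funext i <;> fin_cases i <;>
        (simp [dualCache22, dualTx22] <;> (try abel_nf) <;> (try simp [h2, h2z]))⟩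
  · exact ⟨0, fun p => ![ p.1 1 + p.2 0 + p.2 2, p.1 0, p.1 1 + p.2 2 ], fun p => ![ p.1 1, p.1 0 + p.2 0 + p.2 2, p.1 1 + p.2 1 ], fun A B => by
      rw [h0, h1, hd0, hd1]
      refine ⟨?_, ?_⟩ <;> funext i <;> fin_cases i <;>
        (simp [dualCache22, dualTx22] <;> (try abel_nf) <;> (try simp [h2, h2z]))⟩
  · exact ⟨3, fun p => ![ p.1 0 + p.2 1 + p.2 2, p.1 1, p.1 0 + p.2 2 ], fun p => ![ p.1 0, p.1 1 + p.2 1 + p.2 2, p.1 0 + p.2 0 ], fun A B => by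
      rw [h0, h1, hd0, hd1]
      refine ⟨?_, ?_⟩ <;> funext i <;> fin_cases i <;>
        (simp [dualCache22, dualTx22] <;> (try abel_nf) <;> (try simp [h2, h2z]))⟩
  · exact ⟨2, fun p => ![ p.1 1 + p.2 1, p.1 1, p.1 0 + p.2 2 ], fun p => ![ p.1 1, p.1 1 + p.2 1, p.1 0 + p.2 0 + p.2 2 ], fun A B => by
      rw [h0, h1, hd0, hd1]
      refine ⟨?_, ?_⟩ <;> funext i <;> fin_cases i <;>
        (simp [dualCache22, dualTx22] <;> (try abel_nf) <;> (try simp [h2, h2z]))⟩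
  · exact ⟨2, fun p => ![ p.1 1 + p.2 0 + p.2 2, p.1 1 + p.2 2, p.1 0 ], fun p => ![ p.1 1 + p.2 0 + p.2 1 + p.2 2, p.1 1 + p.2 1 + p.2 2, p.1 0 + p.2 0 ], fun A B => by
      rw [h0, h1, hd0, hd1]
      refine ⟨?_, ?_⟩ <;> funext i <;> fin_cases i <;>
        (simp [dualCache22, dualTx22] <;> (try abel_nf) <;> (try simp [h2, h2z]))⟩
  · exact ⟨3, fun p => ![ p.1 0 + p.2 0, p.1 1 + p.2 2, p.1 0 ], fun p => ![ p.1 0 + p.2 0 + p.2 1 + p.2 2, p.1 1 + p.2 1, p.1 0 + p.2 0 + p.2 2 ], fun A B => by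
      rw [h0, h1, hd0, hd1]
      refine ⟨?_, ?_⟩ <;> funext i <;> fin_cases i <;>
        (simp [dualCache22, dualTx22] <;> (try abel_nf) <;> (try simp [h2, h2z]))⟩
  · exact ⟨0, fun p => ![ p.1 1 + p.2 1, p.1 0 + p.2 2, p.1 1 ], fun p => ![ p.1 1 + p.2 0 + p.2 1 + p.2 2, p.1 0 + p.2 0, p.1 1 + p.2 1 + p.2 2 ], fun A B => by
      rw [h0, h1, hd0, hd1]
      refine ⟨?_, ?_⟩ <;> funext i <;> fin_cases i <;>
        (simp [dualCache22, dualTx22] <;> (try abel_nf) <;> (try simp [h2, h2z]))⟩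
  · exact ⟨1, fun p => ![ p.1 0 + p.2 1 + p.2 2, p.1 0 + p.2 2, p.1 1 ], fun p => ![ p.1 0 + p.2 0 + p.2 1 + p.2 2, p.1 0 + p.2 0 + p.2 2, p.1 1 + p.2 1 ], fun A B => by
      rw [h0, h1, hd0, hd1]
      refine ⟨?_, ?_⟩ <;> funext i <;> fin_cases i <;>
        (simp [dualCache22, dualTx22] <;> (try abel_nf) <;> (try simp [h2, h2z]))⟩
  · exact ⟨3, fun p => ![ p.1 0 + p.2 0, p.1 1 + p.2 2, p.1 0 ], fun p => ![ p.1 0, p.1 1 + p.2 1 + p.2 2, p.1 0 + p.2 0 ], fun A B => by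
      rw [h0, h1, hd0, hd1]
      refine ⟨?_, ?_⟩ <;> funext i <;> fin_cases i <;>
        (simp [dualCache22, dualTx22] <;> (try abel_nf) <;> (try simp [h2, h2z]))⟩
  · exact ⟨2, fun p => ![ p.1 1 + p.2 0 + p.2 2, p.1 1 + p.2 2, p.1 0 ], fun p => ![ p.1 1, p.1 1 + p.2 1, p.1 0 + p.2 0 + p.2 2 ], fun A B => by
      rw [h0, h1, hd0, hd1]
      refine ⟨?_, ?_⟩ <;> funext i <;> fin_cases i <;>
        (simp [dualCache22, dualTx22] <;> (try abel_nf) <;> (try simp [h2, h2z]))⟩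
  · exact ⟨1, fun p => ![ p.1 0 + p.2 1 + p.2 2, p.1 0 + p.2 2, p.1 1 ], fun p => ![ p.1 0, p.1 0 + p.2 0, p.1 1 + p.2 1 + p.2 2 ], fun A B => by
      rw [h0, h1, hd0, hd1]
      refine ⟨?_, ?_⟩ <;> funext i <;> fin_cases i <;>
        (simp [dualCache22, dualTx22] <;> (try abel_nf) <;> (try simp [h2, h2z]))⟩
  · exact ⟨0, fun p => ![ p.1 1 + p.2 1, p.1 0 + p.2 2, p.1 1 ], fun p => ![ p.1 1, p.1 0 + p.2 0 + p.2 2, p.1 1 + p.2 1 ], fun A B => by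
      rw [h0, h1, hd0, hd1]
      refine ⟨?_, ?_⟩ <;> funext i <;> fin_cases i <;>
        (simp [dualCache22, dualTx22] <;> (try abel_nf) <;> (try simp [h2, h2z]))⟩
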